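/- In the diameter lower-bound graph G_{x,y}, for every pair of nodes u, v such that it is not the case that one of u, v lies in A and the other lies in B, the hop distance satisfies dist(u,v) ≤ 4. -/

import Mathlib

inductive DVertex (k logk : ℕ) where
  | a (i : Fin k)
  | b (i : Fin k)
  | fA (h : Fin logk)
  | tA (h : Fin logk)
  | fB (h : Fin logk)
  | tB (h : Fin logk)
  | cA
  | cA'
  | cB
  | cB'
deriving DecidableEq

def dRel (k logk : ℕ) (x y : Fin k → Bool) : DVertex k logk → DVertex k logk → Prop
  | .a i, .fA h => i.val.testBit h.val = false
  | .a i, .tA h => i.val.testBit h.val = true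
  | .b i, .fB h => i.val.testBit h.val = false
  | .b i, .tB h => i.val.testBit h.val = true
  | .fA h, .tB h' => h = h'
  | .tA h, .fB h' => h = h'
  | .a _, .cA => True
  | .b _, .cB => True
  | .fA _, .cA' => True
  | .tA _, .cA' => True
  | .fB _, .cB' => True
  | .tB _, .cB' => True
  | .cA, .cA' => True
  | .cB, .cB' => True
  | .cA', .cB' => True
  | .a i, .cA' => x i = false
  | .b i, .cB' => y i = false
  | _, _ => False

def dGraph (k logk : ℕ) (x y : Fin k → Bool) : SimpleGraph (DVertex k logk) :=
  SimpleGraph.fromRel (dRel k logk x y)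

/-!
Every node outside `B` is within distance 2 of `c̄_A`, and every node outside `A` within
distance 2 of `c̄_B`, along paths through `c_A`, `c_B` and the edge `c̄_A c̄_B` that exist
whatever `x` and `y` are. A pair that is not split between `A` and `B` lies entirely outside
`B` or entirely outside `A`, so the triangle inequality through the corresponding hub gives 4.
-/

namespace SimpleGraph

variable {V : Type*} {G : SimpleGraph V} {u v w : V}

lemma edist_le_two_of_adj_of_adj (huw : G.Adj u w) (hwv : G.Adj w v) : G.edist u v ≤ 2 := by
  simpa using G.edist_le (.cons huw (.cons hwv .nil))

lemma edist_le_two_of_adj (h : G.Adj u v) : G.edist u v ≤ 2 :=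
  (edist_le_one_iff_adj_or_eq.2 (.inl h)).trans one_le_two

lemma edist_le_four_of_edist_le_two (hu : G.edist u w ≤ 2) (hv : G.edist v w ≤ 2) :
    G.edist u v ≤ 4 :=
  calc G.edist u v ≤ G.edist u w + G.edist w v := G.edist_triangle
    _ ≤ 2 + 2 := add_le_add hu (G.edist_comm ▸ hv)
    _ = 4 := by norm_num

end SimpleGraph

namespace dGraph

open SimpleGraph

variable {k logk : ℕ} {x y : Fin k → Bool}

lemma adj_of_dRel {u v : DVertex k logk} (hne : u ≠ v) (hr : dRel k logk x y u v) :
    (dGraph k logk x y).Adj u v :=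
  (fromRel_adj _ _ _).2 ⟨hne, .inl hr⟩

lemma edist_cA'_le_two (u : DVertex k logk) (hu : ¬ ∃ i, u = .b i) :
    (dGraph k logk x y).edist u .cA' ≤ 2 := by
  cases u with
  | a i =>
    exact edist_le_two_of_adj_of_adj (w := .cA) (adj_of_dRel nofun trivial)
      (adj_of_dRel nofun trivial)
  | b i => exact absurd ⟨i, rfl⟩ hu
  | fA _ | tA _ | cA => exact edist_le_two_of_adj (adj_of_dRel nofun trivial)
  | fB _ | tB _ | cB =>
    exact edist_le_two_of_adj_of_adj (w := .cB') (adj_of_dRel nofun trivial)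
      (Adj.symm (adj_of_dRel nofun trivial))
  | cA' => simp
  | cB' =>
    exact edist_le_two_of_adj (Adj.symm (adj_of_dRel nofun trivial))

lemma edist_cB'_le_two (u : DVertex k logk) (hu : ¬ ∃ i, u = .a i) :
    (dGraph k logk x y).edist u .cB' ≤ 2 := by
  cases u with
  | a i => exact absurd ⟨i, rfl⟩ hu
  | b i =>
    exact edist_le_two_of_adj_of_adj (w := .cB) (adj_of_dRel nofun trivial)
      (adj_of_dRel nofun trivial)
  | fB _ | tB _ | cB | cA' => exact edist_le_two_of_adj (adj_of_dRel nofun trivial)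
  | fA _ | tA _ | cA =>
    exact edist_le_two_of_adj_of_adj (w := .cA') (adj_of_dRel nofun trivial)
      (adj_of_dRel nofun trivial)
  | cB' => simp

end dGraph

theorem dGraph_dist_le_four_general (k logk : ℕ)
    (x y : Fin k → Bool) (u v : DVertex k logk)
    (h : ¬ (((∃ i, u = DVertex.a i) ∧ (∃ j, v = DVertex.b j)) ∨
            ((∃ i, v = DVertex.a i) ∧ (∃ j, u = DVertex.b j)))) :
    (dGraph k logk x y).edist u v ≤ 4 := by
  obtain ⟨hu, hv⟩ | ⟨hu, hv⟩ :
      ((¬ ∃ i, u = .b i) ∧ ¬ ∃ i, v = .b i) ∨ ((¬ ∃ i, u = .a i) ∧ ¬ ∃ i, v = .a i) := by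
    cases u <;> cases v <;> simp_all
  · exact SimpleGraph.edist_le_four_of_edist_le_two
      (dGraph.edist_cA'_le_two u hu) (dGraph.edist_cA'_le_two v hv)
  · exact SimpleGraph.edist_le_four_of_edist_le_two
      (dGraph.edist_cB'_le_two u hu) (dGraph.edist_cB'_le_two v hv)

/-- in `G_{x,y}`, for every pair of nodes `u, v` such that it is not
the case that one of them lies in `A` and the other lies in `B`, `dist(u,v) ≤ 4`. -/
theorem dGraph_dist_le_four (k logk : ℕ) (hk : 2 ≤ k) (hpow : k = 2 ^ logk)
    (x y : Fin k → Bool) (u v : DVertex k logk)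
    (h : ¬ (((∃ i, u = DVertex.a i) ∧ (∃ j, v = DVertex.b j)) ∨
            ((∃ i, v = DVertex.a i) ∧ (∃ j, u = DVertex.b j)))) :
    (dGraph k logk x y).edist u v ≤ 4 :=
  dGraph_dist_le_four_general k logk x y u v h
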